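/- Let G be a graph, f a minimum-weight Roman dominating function on G, and u, x vertices with f(u) = 2 and f(x) = 1 such that the function h obtained by swapping the labels of u and x (h(u) = 1, h(x) = 2, h = f elsewhere) is again a Roman dominating function on G. Then dist(u, x) = 2, u is a V_2^f-private neighbor of itself, every other V_2^f-private neighbor of u is adjacent to x, |pn[u, V_2^f]| ≥ 3, and G contains a cycle. -/
import Mathlib


def IsRDF {V : Type*} (G : SimpleGraph V) (f : V → ℕ) : Prop :=
  (∀ v, f v ≤ 2) ∧ ∀ v, f v = 0 → ∃ u, G.Adj v u ∧ f u = 2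

noncomputable def gammaR {V : Type*} [Fintype V] (G : SimpleGraph V) : ℕ :=
  sInf {w | ∃ f, IsRDF G f ∧ ∑ v, f v = w}

def IsMinRDF {V : Type*} [Fintype V] (G : SimpleGraph V) (f : V → ℕ) : Prop :=
  IsRDF G f ∧ ∑ v, f v = gammaR G

noncomputable instance myInstSetFintype {V : Type*} [Fintype V] (s : Set V) : Fintype s :=
  s.toFinite.fintype

/-- The set of `X`-private neighbors of `x`: vertices `y` with `N[y] ∩ X = {x}`. -/
def privateNbrs {V : Type*} (G : SimpleGraph V) (x : V) (X : Set V) : Set V :=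
  {y | X ∩ (G.neighborSet y ∪ {y}) = {x}}


lemma sum_update_aux {V : Type*} [Fintype V] [DecidableEq V] (f : V → ℕ) (a : V) (b : ℕ) :
    (∑ v, Function.update f a b v) + f a = b + ∑ v, f v := by
  rw [Finset.sum_update_of_mem (Finset.mem_univ a),
    ← Finset.add_sum_erase _ f (Finset.mem_univ a), Finset.sdiff_singleton_eq_erase]
  ring

lemma gammaR_le {V : Type*} [Fintype V] (G : SimpleGraph V) (f : V → ℕ)
    (h : IsRDF G f) : gammaR G ≤ ∑ v, f v :=
  Nat.sInf_le ⟨f, h, rfl⟩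

lemma no12 {V : Type*} [Fintype V] [DecidableEq V] (G : SimpleGraph V) (f : V → ℕ)
    (hf : IsMinRDF G f) {a b : V} (ha : f a = 1) (hb : f b = 2) : ¬G.Adj a b := by
  intro hadj
  have hgr : IsRDF G (Function.update f a 0) := by
    constructor
    · intro v
      rcases eq_or_ne v a with hv | hv
      · rw [hv]; simp
      · rw [Function.update_of_ne hv]; exact hf.1.1 v
    · intro v hv
      by_cases hv2 : v = a
      · have hba : b ≠ a := by intro h; rw [h, ha] at hb; omega
        exact ⟨b, by rw [hv2]; exact hadj, by simp [Function.update_of_ne hba, hb]⟩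
      · have hv0 : f v = 0 := by simpa [Function.update_of_ne hv2] using hv
        obtain ⟨w, hw, hw2⟩ := hf.1.2 v hv0
        have hwa : w ≠ a := by intro h; rw [h, ha] at hw2; omega
        exact ⟨w, hw, by simp [Function.update_of_ne hwa, hw2]⟩
  have h1 : gammaR G ≤ ∑ v, Function.update f a 0 v := gammaR_le G _ hgr
  have h2 := sum_update_aux f a 0
  rw [ha] at h2
  have h3 := hf.2
  omega

theorem swap_two_one {V : Type*} [Fintype V] [DecidableEq V]
    (G : SimpleGraph V) (f : V → ℕ) (hf : IsMinRDF G f)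
    (u x : V) (hu : f u = 2) (hx : f x = 1)
    (h1 : IsRDF G (Function.update (Function.update f u 1) x 2)) :
    G.dist u x = 2 ∧
    u ∈ privateNbrs G u {w | f w = 2} ∧
    (∀ y ∈ privateNbrs G u {w | f w = 2}, y ≠ u → G.Adj x y) ∧
    3 ≤ (privateNbrs G u {w | f w = 2}).ncard ∧
    ¬G.IsAcyclic := by
  have hux : u ≠ x := by intro h; rw [h, hx] at hu; omega
  set fs := Function.update (Function.update f u 1) x 2 with hfs
  -- basic values of fs
  have hval_hu : fs u = 1 := by
    rw [hfs, Function.update_of_ne hux, Function.update_self]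
  have hval_hx : fs x = 2 := by rw [hfs, Function.update_self]
  have hval : ∀ w, w ≠ u → w ≠ x → fs w = f w := fun w h1 h2 => by
    rw [hfs, Function.update_of_ne h2, Function.update_of_ne h1]
  -- fs is a minimum RDF
  have hsumfs : ∑ v, fs v = ∑ v, f v := by
    have e1 := sum_update_aux (Function.update f u 1) x 2
    have e2 := sum_update_aux f u 1
    have hxval : Function.update f u 1 x = 1 := by
      rw [Function.update_of_ne (Ne.symm hux), hx]
    rw [hxval] at e1
    rw [hu] at e2
    rw [← hfs] at e1
    omega
  have hminfs : IsMinRDF G fs := ⟨h1, by rw [hsumfs]; exact hf.2⟩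
  -- u is its own private neighbor
  have hupn : {w | f w = 2} ∩ (G.neighborSet u ∪ {u}) = {u} := by
    apply Set.eq_singleton_iff_unique_mem.mpr
    refine ⟨⟨hu, Or.inr rfl⟩, ?_⟩
    rintro w ⟨hw2, hw⟩
    rcases hw with hwadj | hwe
    · exfalso
      have hwadj' : G.Adj u w := hwadj
      have hwu : w ≠ u := (G.ne_of_adj hwadj').symm
      have hw2' : f w = 2 := hw2
      have hwx : w ≠ x := by
        intro h; rw [h, hx] at hw2'; omega
      exact no12 G fs hminfs hval_hu (by rw [hval w hwu hwx]; exact hw2') hwadj'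
    · exact hwe
  have hupriv : u ∈ privateNbrs G u {w | f w = 2} := hupn
  have hnadjux : ¬G.Adj u x := fun ha => no12 G f hf hx hu ha.symm
  -- structure of other private neighbors
  have hpn3 : ∀ y ∈ privateNbrs G u {w | f w = 2}, y ≠ u →
      G.Adj u y ∧ G.Adj x y ∧ f y = 0 := by
    intro y hy hyu
    have hy' : {w | f w = 2} ∩ (G.neighborSet y ∪ {y}) = {u} := hy
    have humem : u ∈ {w | f w = 2} ∩ (G.neighborSet y ∪ {y}) := by rw [hy']; rfl
    have hadjyu : G.Adj y u := by
      rcases humem.2 with h | h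
      · exact h
      · exact absurd h.symm hyu
    have hfy2 : f y ≠ 2 := by
      intro h2
      have hmem : y ∈ {w | f w = 2} ∩ (G.neighborSet y ∪ {y}) := ⟨h2, Or.inr rfl⟩
      rw [hy'] at hmem
      exact hyu hmem
    have hfy1 : f y ≠ 1 := fun hh => no12 G f hf hh hu hadjyu
    have hfy0 : f y = 0 := by have := hf.1.1 y; omega
    have hyx : y ≠ x := by intro e; rw [e, hx] at hfy0; omega
    have hhy : fs y = 0 := by rw [hval y hyu hyx]; exact hfy0
    obtain ⟨w, hw, hw2⟩ := h1.2 y hhy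
    by_cases hwx : w = x
    · rw [hwx] at hw
      exact ⟨hadjyu.symm, hw.symm, hfy0⟩
    · exfalso
      have hwu : w ≠ u := by intro e; rw [e, hval_hu] at hw2; omega
      have hfw : f w = 2 := by rw [← hval w hwu hwx]; exact hw2
      have hmem : w ∈ {w | f w = 2} ∩ (G.neighborSet y ∪ {y}) := ⟨hfw, Or.inl hw⟩
      rw [hy'] at hmem
      exact hwu hmem
  -- non-private 0-vertices adjacent to u have another 2-neighbor
  have hother : ∀ v, f v = 0 → v ∉ privateNbrs G u {w | f w = 2} → G.Adj v u →
      ∃ z, G.Adj v z ∧ f z = 2 ∧ z ≠ u := by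
    intro v hv0 hvpn hvu
    have hne : {w | f w = 2} ∩ (G.neighborSet v ∪ {v}) ≠ {u} := hvpn
    have humem : u ∈ {w | f w = 2} ∩ (G.neighborSet v ∪ {v}) := ⟨hu, Or.inl hvu⟩
    by_contra hc
    push_neg at hc
    apply hne
    apply Set.eq_singleton_iff_unique_mem.mpr ⟨humem, ?_⟩
    rintro z ⟨hz2, hzn⟩
    rcases hzn with hzn | hzn
    · exact hc z hzn hz2
    · exfalso
      have hz2' : f z = 2 := hz2
      have hzv : z = v := hzn
      rw [hzv, hv0] at hz2'
      omega
  -- |pn| ≥ 3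
  have hcard : 3 ≤ (privateNbrs G u {w | f w = 2}).ncard := by
    by_contra hc
    push_neg at hc
    by_cases hex : ∃ y ∈ privateNbrs G u {w | f w = 2}, y ≠ u
    · -- pn = {u, y}
      obtain ⟨y, hy, hyu⟩ := hex
      obtain ⟨hadjuy, hadjxy, hfy0⟩ := hpn3 y hy hyu
      have hyx : y ≠ x := by intro e; rw [e, hx] at hfy0; omega
      have hpn2 : privateNbrs G u {w | f w = 2} = {u, y} := by
        refine (Set.eq_of_subset_of_ncard_le ?_ ?_ (Set.toFinite _)).symm
        · rintro z (rfl | rfl)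
          · exact hupriv
          · exact hy
        · rw [Set.ncard_pair (Ne.symm hyu)]; omega
      set g := Function.update (Function.update (Function.update f u 0) x 0) y 2 with hg
      have hgy : g y = 2 := by rw [hg, Function.update_self]
      have hgval : ∀ w, w ≠ u → w ≠ x → w ≠ y → g w = f w := fun w w1 w2 w3 => by
        rw [hg, Function.update_of_ne w3, Function.update_of_ne w2, Function.update_of_ne w1]
      have hgu : g u = 0 := by
        rw [hg, Function.update_of_ne (Ne.symm hyu), Function.update_of_ne hux,
          Function.update_self]
      have hgx : g x = 0 := by
        rw [hg, Function.update_of_ne (Ne.symm hyx), Function.update_self]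
      have hgr : IsRDF G g := by
        constructor
        · intro v
          by_cases h1 : v = u; · rw [h1, hgu]; omega
          by_cases h2 : v = x; · rw [h2, hgx]; omega
          by_cases h3 : v = y; · rw [h3, hgy]
          rw [hgval v h1 h2 h3]; exact hf.1.1 v
        · intro v hv
          by_cases hvu : v = u
          · exact ⟨y, by rw [hvu]; exact hadjuy, hgy⟩
          by_cases hvx : v = x
          · exact ⟨y, by rw [hvx]; exact hadjxy, hgy⟩
          by_cases hvy : v = y
          · rw [hvy, hgy] at hv; omega
          have hv0 : f v = 0 := by rw [← hgval v hvu hvx hvy]; exact hv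
          obtain ⟨w, hw, hw2⟩ := hf.1.2 v hv0
          by_cases hwu : w = u
          · have hvpn : v ∉ privateNbrs G u {w | f w = 2} := by
              rw [hpn2]
              rintro (rfl | rfl)
              · exact hvu rfl
              · exact hvy rfl
            obtain ⟨z, hz1, hz2, hz3⟩ := hother v hv0 hvpn (by rw [← hwu]; exact hw)
            have hzx : z ≠ x := by intro e; rw [e, hx] at hz2; omega
            have hzy : z ≠ y := by intro e; rw [e, hfy0] at hz2; omega
            exact ⟨z, hz1, by rw [hgval z hz3 hzx hzy]; exact hz2⟩
          · have hwx : w ≠ x := by intro e; rw [e, hx] at hw2; omega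
            have hwy : w ≠ y := by intro e; rw [e, hfy0] at hw2; omega
            exact ⟨w, hw, by rw [hgval w hwu hwx hwy]; exact hw2⟩
      have hle : gammaR G ≤ ∑ v, g v := gammaR_le G g hgr
      have e1 := sum_update_aux (Function.update (Function.update f u 0) x 0) y 2
      have e2 := sum_update_aux (Function.update f u 0) x 0
      have e3 := sum_update_aux f u 0
      rw [← hg] at e1
      have ey : Function.update (Function.update f u 0) x 0 y = 0 := by
        rw [Function.update_of_ne hyx, Function.update_of_ne hyu, hfy0]
      have ex : Function.update f u 0 x = 1 := by
        rw [Function.update_of_ne (Ne.symm hux), hx]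
      rw [ey] at e1
      rw [ex] at e2
      rw [hu] at e3
      have := hf.2
      omega
    · -- pn = {u}
      push_neg at hex
      have hpn1 : privateNbrs G u {w | f w = 2} = {u} :=
        Set.eq_singleton_iff_unique_mem.mpr ⟨hupriv, hex⟩
      have hgr : IsRDF G (Function.update f u 1) := by
        constructor
        · intro v
          by_cases hv : v = u
          · rw [hv, Function.update_self]; omega
          · rw [Function.update_of_ne hv]; exact hf.1.1 v
        · intro v hv
          have hvu : v ≠ u := by
            intro e; rw [e, Function.update_self] at hv; omega
          have hv0 : f v = 0 := by rwa [Function.update_of_ne hvu] at hv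
          obtain ⟨w, hw, hw2⟩ := hf.1.2 v hv0
          by_cases hwu : w = u
          · have hvpn : v ∉ privateNbrs G u {w | f w = 2} := by
              rw [hpn1]; exact hvu
            obtain ⟨z, hz1, hz2, hz3⟩ := hother v hv0 hvpn (by rw [← hwu]; exact hw)
            exact ⟨z, hz1, by rw [Function.update_of_ne hz3]; exact hz2⟩
          · exact ⟨w, hw, by rw [Function.update_of_ne hwu]; exact hw2⟩
      have hle : gammaR G ≤ ∑ v, Function.update f u 1 v := gammaR_le G _ hgr
      have e := sum_update_aux f u 1
      rw [hu] at e
      have := hf.2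
      omega
  -- extract two distinct private neighbors ≠ u
  have h2lt : 1 < ((privateNbrs G u {w | f w = 2}) \ {u}).ncard := by
    have := Set.ncard_diff_singleton_add_one hupriv (Set.toFinite _)
    omega
  obtain ⟨y₁, y₂, hy₁, hy₂, hne⟩ := (Set.one_lt_ncard_iff (Set.toFinite _)).1 h2lt
  obtain ⟨hy₁p, hy₁u⟩ := hy₁
  obtain ⟨hy₂p, hy₂u⟩ := hy₂
  have hy₁u : y₁ ≠ u := hy₁u
  have hy₂u : y₂ ≠ u := hy₂u
  obtain ⟨ha₁, hb₁, hf₁⟩ := hpn3 y₁ hy₁p hy₁u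
  obtain ⟨ha₂, hb₂, hf₂⟩ := hpn3 y₂ hy₂p hy₂u
  -- distance
  have hdle : G.dist u x ≤ 2 := by
    have := SimpleGraph.dist_le
      (SimpleGraph.Walk.cons ha₁ (SimpleGraph.Walk.cons hb₁.symm SimpleGraph.Walk.nil))
    simpa using this
  have hreach : G.Reachable u x :=
    ⟨SimpleGraph.Walk.cons ha₁ (SimpleGraph.Walk.cons hb₁.symm SimpleGraph.Walk.nil)⟩
  have hne0 : G.dist u x ≠ 0 := by
    intro h
    rcases SimpleGraph.dist_eq_zero_iff_eq_or_not_reachable.mp h with he | hn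
    · exact hux he
    · exact hn hreach
  have hne1 : G.dist u x ≠ 1 := fun h => hnadjux (SimpleGraph.dist_eq_one_iff_adj.mp h)
  refine ⟨by omega, hupriv, fun y hy hyu => (hpn3 y hy hyu).2.1, hcard, ?_⟩
  -- cycle
  intro hac
  have hp₁ : (SimpleGraph.Walk.cons ha₁ (SimpleGraph.Walk.cons hb₁.symm SimpleGraph.Walk.nil) : G.Walk u x).IsPath := by
    rw [SimpleGraph.Walk.isPath_def]
    simp [ha₁.ne, hux, hb₁.ne']
  have hp₂ : (SimpleGraph.Walk.cons ha₂ (SimpleGraph.Walk.cons hb₂.symm SimpleGraph.Walk.nil) : G.Walk u x).IsPath := by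
    rw [SimpleGraph.Walk.isPath_def]
    simp [ha₂.ne, hux, hb₂.ne']
  have heq := hac.path_unique ⟨_, hp₁⟩ ⟨_, hp₂⟩
  have hsup := congrArg (fun p : G.Path u x => p.1.support) heq
  simp only [SimpleGraph.Walk.support_cons, SimpleGraph.Walk.support_nil] at hsup
  have : y₁ = y₂ := by simpa using hsup
  exact hne this
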